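/- Every tensor A ∈ C^{m×n×p} admits a T-SVD: A = U * S * V^H, where U ∈ C^{m×m×p} and V ∈ C^{n×n×p} are unitary tensors and S ∈ C^{m×n×p} is an F-diagonal tensor (each frontal slice of its Fourier-domain block diagonalization is a diagonal matrix with nonnegative entries). -/

import Mathlib

open Matrix Kronecker
open scoped ComplexOrder

namespace TProd

/-- A third-order tensor with `p` frontal slices, each a matrix indexed by `ι × κ`. -/
abbrev Tensor (ι κ : Type) (p : ℕ) := Fin p → Matrix ι κ ℂ

variable {p : ℕ} [NeZero p]

/-- Block circulant matrix of a tensor: block `(i,j)` is the frontal slice `A (i - j)`. -/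
def bcirc {ι κ : Type} (A : Tensor ι κ p) : Matrix (Fin p × ι) (Fin p × κ) ℂ :=
  Matrix.of fun ik jl => A (ik.1 - jl.1) ik.2 jl.2

/-- Stack the frontal slices vertically. -/
def tunfold {ι κ : Type} (A : Tensor ι κ p) : Matrix (Fin p × ι) κ ℂ :=
  Matrix.of fun ik j => A ik.1 ik.2 j

/-- Inverse of `tunfold`. -/
def tfold {ι κ : Type} (M : Matrix (Fin p × ι) κ ℂ) : Tensor ι κ p :=
  fun k => Matrix.of fun a b => M (k, a) b

/-- The T-product `A * B := fold (bcirc A · unfold B)`. -/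
noncomputable def tprod {ι κ μ : Type} [Fintype κ] (A : Tensor ι κ p) (B : Tensor κ μ p) :
    Tensor ι μ p :=
  tfold (bcirc A * tunfold B)

/-- Tensor conjugate transpose: conjugate-transpose each slice and reverse slices 2..p. -/
def tconjT {ι κ : Type} (A : Tensor ι κ p) : Tensor κ ι p := fun k => (A (-k))ᴴ

/-- Tensor transpose: transpose each slice and reverse slices 2..p. -/
def ttransp {ι κ : Type} (A : Tensor ι κ p) : Tensor κ ι p := fun k => (A (-k))ᵀ

/-- The identity tensor: identity first frontal slice, other slices zero. -/
def tid (ι : Type) [DecidableEq ι] (p : ℕ) [NeZero p] : Tensor ι ι p :=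
  fun k => if k = 0 then 1 else 0

/-- Left inverse of `bcirc`: extract the first block column. -/
def bcircInv {ι κ : Type} (M : Matrix (Fin p × ι) (Fin p × κ) ℂ) : Tensor ι κ p :=
  fun k => Matrix.of fun a b => M (k, a) ((0 : Fin p), b)

/-- The unitary discrete Fourier matrix of size `p`. -/
noncomputable def Fmat (p : ℕ) : Matrix (Fin p) (Fin p) ℂ :=
  Matrix.of fun j k =>
    Complex.exp (-(2 * Real.pi * Complex.I * (j : ℕ) * (k : ℕ)) / p) / (Real.sqrt p : ℂ)

/-- Fourier-domain block diagonalization `(F_pᴴ ⊗ I) · bcirc A · (F_p ⊗ I)`. -/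
noncomputable def fblocks {ι κ : Type} [Fintype ι] [Fintype κ] [DecidableEq ι] [DecidableEq κ]
    (A : Tensor ι κ p) : Matrix (Fin p × ι) (Fin p × κ) ℂ :=
  ((Fmat p)ᴴ ⊗ₖ (1 : Matrix ι ι ℂ)) * bcirc A * (Fmat p ⊗ₖ (1 : Matrix κ κ ℂ))

/-- `S` is F-diagonal: Fourier blocks are (generalized) diagonal with nonnegative real
entries. -/
def IsFDiag {ι κ : Type} [Fintype ι] [Fintype κ] [DecidableEq ι] [DecidableEq κ]
    (S : Tensor ι κ p) : Prop :=
  (∀ i j a b, fblocks S (i, a) (j, b) ≠ 0 → i = j) ∧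
  (∀ x y y', fblocks S x y ≠ 0 → fblocks S x y' ≠ 0 → y = y') ∧
  (∀ x x' y, fblocks S x y ≠ 0 → fblocks S x' y ≠ 0 → x = x') ∧
  (∀ x y, 0 ≤ (fblocks S x y).re ∧ (fblocks S x y).im = 0)

/-- A tensor `Q` is unitary for the T-product. -/
def IsTUnitary {ι : Type} [Fintype ι] [DecidableEq ι] (Q : Tensor ι ι p) : Prop :=
  tprod (tconjT Q) Q = tid ι p ∧ tprod Q (tconjT Q) = tid ι p

/-- `(U, S, V)` is a T-SVD of `A`. -/
def IsTSVD {ι κ : Type} [Fintype ι] [Fintype κ] [DecidableEq ι] [DecidableEq κ]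
    (A : Tensor ι κ p) (U : Tensor ι ι p) (S : Tensor ι κ p) (V : Tensor κ κ p) : Prop :=
  IsTUnitary U ∧ IsTUnitary V ∧ IsFDiag S ∧ A = tprod U (tprod S (tconjT V))

/-- Apply a scalar function to the singular values of an F-diagonal tensor. -/
noncomputable def fhat {ι κ : Type} [Fintype ι] [Fintype κ] [DecidableEq ι] [DecidableEq κ]
    (f : ℂ → ℂ) (S : Tensor ι κ p) : Tensor ι κ p :=
  bcircInv ((Fmat p ⊗ₖ (1 : Matrix ι ι ℂ)) * (fblocks S).map f *
    ((Fmat p)ᴴ ⊗ₖ (1 : Matrix κ κ ℂ)))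

open Classical in
/-- The generalized tensor function induced by the scalar function `f` via the T-SVD. -/
noncomputable def gtf {ι κ : Type} [Fintype ι] [Fintype κ] [DecidableEq ι] [DecidableEq κ]
    (f : ℂ → ℂ) (A : Tensor ι κ p) : Tensor ι κ p :=
  if h : ∃ t : Tensor ι ι p × Tensor ι κ p × Tensor κ κ p, IsTSVD A t.1 t.2.1 t.2.2 then
    tprod h.choose.1 (tprod (fhat f h.choose.2.1) (tconjT h.choose.2.2))
  else 0

/-- An odd scalar function. -/
def OddFn (f : ℂ → ℂ) : Prop := ∀ z, f (-z) = -f z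

open Classical in
/-- The Moore–Penrose inverse of a matrix. -/
noncomputable def mpinv {ι κ : Type} [Fintype ι] [Fintype κ] (M : Matrix ι κ ℂ) :
    Matrix κ ι ℂ :=
  if h : ∃ N : Matrix κ ι ℂ,
      M * N * M = M ∧ N * M * N = N ∧ (M * N)ᴴ = M * N ∧ (N * M)ᴴ = N * M then
    h.choose
  else 0

/-- The Moore–Penrose inverse of a tensor: `A^† := bcirc⁻¹ ((bcirc A)^†)`. -/
noncomputable def tpinv {ι κ : Type} [Fintype ι] [Fintype κ] (A : Tensor ι κ p) :
    Tensor κ ι p :=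
  bcircInv (mpinv (bcirc A))

open Classical in
/-- Matrix function of a Hermitian matrix via the spectral theorem. -/
noncomputable def hermFun {ι : Type} [Fintype ι] [DecidableEq ι] (f : ℂ → ℂ)
    (M : Matrix ι ι ℂ) : Matrix ι ι ℂ :=
  if h : M.IsHermitian then
    (h.eigenvectorUnitary : Matrix ι ι ℂ) *
      Matrix.diagonal (fun i => f ((h.eigenvalues i : ℝ) : ℂ)) *
      (h.eigenvectorUnitary : Matrix ι ι ℂ)ᴴ
  else 0

open Classical in
/-- Square root of a positive semidefinite matrix. -/
noncomputable def msqrt {ι : Type} [Fintype ι] [DecidableEq ι] (M : Matrix ι ι ℂ) :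
    Matrix ι ι ℂ :=
  if h : M.PosSemidef then
    (h.1.eigenvectorUnitary : Matrix ι ι ℂ) *
      Matrix.diagonal (fun i => ((Real.sqrt (h.1.eigenvalues i) : ℝ) : ℂ)) *
      (star h.1.eigenvectorUnitary : Matrix ι ι ℂ)
  else 0

/-- The standard tensor T-function (here used on Hermitian tensors). -/
noncomputable def stdTf {ι : Type} [Fintype ι] [DecidableEq ι] (f : ℂ → ℂ)
    (A : Tensor ι ι p) : Tensor ι ι p :=
  bcircInv (hermFun f (bcirc A))

/-- The tensor square root of a (PSD) F-square tensor. -/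
noncomputable def tsqrt {ι : Type} [Fintype ι] [DecidableEq ι] (A : Tensor ι ι p) :
    Tensor ι ι p :=
  bcircInv (msqrt (bcirc A))

/-- 2×2 block tensor, formed by block-concatenating frontal slices. -/
def tblock {ι₁ ι₂ κ₁ κ₂ : Type} (A : Tensor ι₁ κ₁ p) (B : Tensor ι₁ κ₂ p)
    (C : Tensor ι₂ κ₁ p) (D : Tensor ι₂ κ₂ p) : Tensor (ι₁ ⊕ ι₂) (κ₁ ⊕ κ₂) p :=
  fun k => Matrix.fromBlocks (A k) (B k) (C k) (D k)

end TProd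

open TProd Matrix Kronecker

/-- `S` is F-diagonal in the strict sense: each Fourier-domain diagonal block is a
diagonal matrix with nonnegative (real) entries, and off-diagonal blocks vanish. -/
def IsFDiagFin {m n p : ℕ} [NeZero p] (S : Tensor (Fin m) (Fin n) p) : Prop :=
  (∀ (i j : Fin p) (a : Fin m) (b : Fin n),
      fblocks S (i, a) (j, b) ≠ 0 → i = j ∧ (a : ℕ) = (b : ℕ)) ∧
  (∀ x y, 0 ≤ (fblocks S x y).re ∧ (fblocks S x y).im = 0)

/-! Conjugation by `F_p ⊗ I` turns `bcirc` into an injective `*`-homomorphism `fblocks` from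
tensors under the T-product to block-diagonal matrices: the columns of `F_p` are the characters
of `ℤ/p`, hence common eigenvectors of all block circulants, and the `i`-th diagonal block of
`fblocks A` is the `i`-th coefficient of the discrete Fourier transform of the slices of `A`.
A matrix SVD of every block, transformed back, gives `U`, `S` and `V`.

For the matrix SVD of `T`, take an orthonormal eigenbasis `v` of `Tᴴ T` with decreasing
eigenvalues: the images `T vⱼ` are orthogonal, their norms are the singular values, and they
vanish for `j ≥ m` because `T` has rank at most `m`; so Gram–Schmidt completes them to an
orthonormal basis of the target. -/

section SVD

open Module InnerProductSpace

variable {𝕜 : Type*} [RCLike 𝕜]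
  {E : Type*} [NormedAddCommGroup E] [InnerProductSpace 𝕜 E] [FiniteDimensional 𝕜 E]
  {F : Type*} [NormedAddCommGroup F] [InnerProductSpace 𝕜 F] [FiniteDimensional 𝕜 F]

theorem exists_orthonormalBasis_eq_norm_smul {ι : Type*} [Fintype ι] [LinearOrder ι]
    [LocallyFiniteOrderBot ι] [WellFoundedLT ι] (h : finrank 𝕜 F = Fintype.card ι)
    {w : ι → F} (hw : Pairwise fun i j => inner 𝕜 (w i) (w j) = 0) :
    ∃ u : OrthonormalBasis ι 𝕜 F, ∀ i, w i = (‖w i‖ : 𝕜) • u i := by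
  refine ⟨gramSchmidtOrthonormalBasis h w, fun i => ?_⟩
  by_cases hi : w i = 0
  · simp [hi]
  rw [gramSchmidtOrthonormalBasis_apply_of_orthogonal h hw hi, smul_smul,
    mul_inv_cancel₀ (by simpa using hi), one_smul]

namespace LinearMap

variable (T : E →ₗ[𝕜] F) {n : ℕ}

theorem inner_apply_eigenvectorBasis_adjoint_comp_self (hn : finrank 𝕜 E = n) (i j : Fin n) :
    inner 𝕜 (T (T.isSymmetric_adjoint_comp_self.eigenvectorBasis hn i))
        (T (T.isSymmetric_adjoint_comp_self.eigenvectorBasis hn j)) =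
      if i = j then (T.singularValues j ^ 2 : 𝕜) else 0 := by
  rw [← adjoint_inner_right, ← comp_apply, T.isSymmetric_adjoint_comp_self.apply_eigenvectorBasis,
    inner_smul_right, orthonormal_iff_ite.mp (OrthonormalBasis.orthonormal _),
    ← T.sq_singularValues_fin hn]
  split_ifs <;> simp

theorem norm_apply_eigenvectorBasis_adjoint_comp_self (hn : finrank 𝕜 E = n) (j : Fin n) :
    ‖T (T.isSymmetric_adjoint_comp_self.eigenvectorBasis hn j)‖ = T.singularValues j := by
  have h := T.inner_apply_eigenvectorBasis_adjoint_comp_self hn j j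
  rw [if_pos rfl, inner_self_eq_norm_sq_to_K] at h
  exact (pow_left_inj₀ (norm_nonneg _) (T.singularValues_nonneg j) two_ne_zero).mp
    (by exact_mod_cast h)

theorem singularValues_eq_zero_of_finrank_le {i : ℕ} (hi : finrank 𝕜 F ≤ i) :
    T.singularValues i = 0 :=
  T.singularValues_eq_zero_iff_le_finrank_range.mpr ((Submodule.finrank_le _).trans hi)

theorem exists_orthonormalBasis_apply_eq_singularValues_smul (hn : finrank 𝕜 E = n) {m : ℕ}
    (hm : finrank 𝕜 F = m) :
    ∃ (v : OrthonormalBasis (Fin n) 𝕜 E) (u : OrthonormalBasis (Fin m) 𝕜 F), ∀ j : Fin n,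
      T (v j) = if h : (j : ℕ) < m then (T.singularValues j : 𝕜) • u ⟨j, h⟩ else 0 := by
  set v := T.isSymmetric_adjoint_comp_self.eigenvectorBasis hn
  let w : Fin m → F := fun a => if h : (a : ℕ) < n then T (v ⟨a, h⟩) else 0
  have hw : Pairwise fun a b => inner 𝕜 (w a) (w b) = 0 := by
    intro a b hab
    simp only [w]
    split_ifs
    · rw [T.inner_apply_eigenvectorBasis_adjoint_comp_self hn, if_neg]
      simpa [Fin.ext_iff] using Fin.val_ne_of_ne hab
    all_goals simp
  obtain ⟨u, hu⟩ := exists_orthonormalBasis_eq_norm_smul (by simpa using hm) hw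
  refine ⟨v, u, fun j => ?_⟩
  split_ifs with hj
  · have hwj := hu ⟨j, hj⟩
    simp only [w, dif_pos j.2] at hwj
    rwa [← T.norm_apply_eigenvectorBasis_adjoint_comp_self hn]
  · rw [← norm_eq_zero, T.norm_apply_eigenvectorBasis_adjoint_comp_self hn]
    exact T.singularValues_eq_zero_of_finrank_le (by omega)

end LinearMap

end SVD

namespace Matrix

def rectDiagonal {m n : ℕ} {R : Type*} [Zero R] (d : Fin n → R) : Matrix (Fin m) (Fin n) R :=
  of fun a b => if (a : ℕ) = b then d b else 0

theorem exists_svd {𝕜 : Type*} [RCLike 𝕜] {m n : ℕ} (M : Matrix (Fin m) (Fin n) 𝕜) :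
    ∃ U ∈ unitaryGroup (Fin m) 𝕜, ∃ V ∈ unitaryGroup (Fin n) 𝕜, ∃ σ : Fin n → ℝ, (∀ j, 0 ≤ σ j) ∧
      M = U * (rectDiagonal (fun j => (σ j : 𝕜)) : Matrix (Fin m) (Fin n) 𝕜) * Vᴴ := by
  set T := toEuclideanLin M
  obtain ⟨v, u, hT⟩ := T.exists_orthonormalBasis_apply_eq_singularValues_smul
    finrank_euclideanSpace_fin finrank_euclideanSpace_fin
  set U := (EuclideanSpace.basisFun (Fin m) 𝕜).toBasis.toMatrix u
  set V := (EuclideanSpace.basisFun (Fin n) 𝕜).toBasis.toMatrix v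
  have hV := (EuclideanSpace.basisFun (Fin n) 𝕜).toMatrix_orthonormalBasis_mem_unitary v
  have hMV : M * V =
      U * (rectDiagonal (fun j => (T.singularValues j : 𝕜)) : Matrix (Fin m) (Fin n) 𝕜) := by
    ext x j
    have hTj := congrArg (fun y : EuclideanSpace 𝕜 (Fin m) => y x) (hT j)
    simp only [T, toLpLin_apply] at hTj
    change (M *ᵥ (v j).ofLp) x = ∑ a, u a x * rectDiagonal _ a j
    simp only [hTj, rectDiagonal, of_apply, mul_ite, mul_zero]
    split_ifs with hj
    · rw [Finset.sum_eq_single_of_mem ⟨j, hj⟩ (Finset.mem_univ _)]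
      · simp [T, RCLike.real_smul_eq_coe_mul, mul_comm]
      · intro a _ ha
        rw [if_neg (fun h => ha (Fin.ext h))]
    · refine (Finset.sum_eq_zero fun a _ => if_neg ?_).symm
      omega
  refine ⟨U, (EuclideanSpace.basisFun (Fin m) 𝕜).toMatrix_orthonormalBasis_mem_unitary u, V, hV,
    fun j => T.singularValues j, fun j => T.singularValues_nonneg j, ?_⟩
  calc M = M * (V * Vᴴ) := by
        rw [← star_eq_conjTranspose, mem_unitaryGroup_iff.mp hV, Matrix.mul_one]
    _ = _ := by rw [← Matrix.mul_assoc, hMV]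

end Matrix

namespace TProd

variable {p : ℕ} {ι κ μ : Type}

def bdiag (D : Fin p → Matrix ι κ ℂ) : Matrix (Fin p × ι) (Fin p × κ) ℂ :=
  of fun x y => if x.1 = y.1 then D x.1 x.2 y.2 else 0

theorem bdiag_mul [Fintype κ] (D : Fin p → Matrix ι κ ℂ) (E : Fin p → Matrix κ μ ℂ) :
    bdiag D * bdiag E = bdiag fun i => D i * E i := by
  ext ⟨i, a⟩ ⟨j, b⟩
  by_cases hij : i = j
  · subst hij
    simp [bdiag, mul_apply, Fintype.sum_prod_type]
  · simp [bdiag, mul_apply, Fintype.sum_prod_type, hij]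

theorem bdiag_conjTranspose (D : Fin p → Matrix ι κ ℂ) :
    (bdiag D)ᴴ = bdiag fun i => (D i)ᴴ := by
  ext ⟨i, a⟩ ⟨j, b⟩
  by_cases hij : i = j
  · subst hij
    simp [bdiag]
  · simp [bdiag, hij, Ne.symm hij]

theorem bdiag_one [DecidableEq ι] : bdiag (fun _ : Fin p => (1 : Matrix ι ι ℂ)) = 1 := by
  ext ⟨i, a⟩ ⟨j, b⟩
  by_cases hij : i = j
  · subst hij
    simp [bdiag, one_apply]
  · simp [bdiag, one_apply, hij]

variable [NeZero p]

noncomputable def finStdAddChar (p : ℕ) [NeZero p] : AddChar (Fin p) ℂ where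
  toFun t := ZMod.stdAddChar ((t : ℕ) : ZMod p)
  map_zero_eq_one' := by simp
  map_add_eq_mul' a b := by
    rw [Fin.val_add, ZMod.natCast_mod, Nat.cast_add, AddChar.map_add_eq_mul]

theorem finStdAddChar_mul (k j : Fin p) :
    finStdAddChar p (k * j) = Complex.exp (2 * Real.pi * Complex.I * (k : ℕ) * (j : ℕ) / p) := by
  change ZMod.stdAddChar (((k * j : Fin p) : ℕ) : ZMod p) = _
  rw [Fin.val_mul, ZMod.natCast_mod, ← Int.cast_natCast, ZMod.stdAddChar_coe]
  push_cast
  ring_nf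

theorem finStdAddChar_eq_one_iff (c : Fin p) : finStdAddChar p c = 1 ↔ c = 0 := by
  change ZMod.stdAddChar ((c : ℕ) : ZMod p) = 1 ↔ c = 0
  rw [← AddChar.map_zero_eq_one (ZMod.stdAddChar (N := p)), ZMod.injective_stdAddChar.eq_iff,
    ZMod.natCast_eq_zero_iff, ← Fin.val_eq_zero_iff]
  exact ⟨fun h => Nat.eq_zero_of_dvd_of_lt h c.2, fun h => h ▸ dvd_zero p⟩

open Fin.CommRing in
theorem sum_finStdAddChar_mul (c : Fin p) :
    ∑ k, finStdAddChar p (k * c) = if c = 0 then (p : ℂ) else 0 := by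
  split_ifs with hc
  · simp [hc]
  · simp_rw [mul_comm _ c, ← AddChar.mulShift_apply]
    refine AddChar.sum_eq_zero_of_ne_one fun h => hc ?_
    rw [← finStdAddChar_eq_one_iff, ← mul_one c, ← AddChar.mulShift_apply, h, AddChar.one_apply]

theorem Fmat_apply (k j : Fin p) :
    Fmat p k j = finStdAddChar p (-(k * j)) / (Real.sqrt p : ℂ) := by
  rw [AddChar.map_neg_eq_inv, finStdAddChar_mul, ← Complex.exp_neg, Fmat, of_apply, neg_div]

theorem conjTranspose_Fmat_mul_Fmat : (Fmat p)ᴴ * Fmat p = 1 := by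
  ext i j
  have hp : (Real.sqrt p : ℂ) * (Real.sqrt p : ℂ) = p := by
    rw [← Complex.ofReal_mul, Real.mul_self_sqrt (Nat.cast_nonneg p), Complex.ofReal_natCast]
  have hterm (k : Fin p) :
      star (Fmat p k i) * Fmat p k j = finStdAddChar p (k * (i - j)) / p := by
    rw [Fmat_apply, Fmat_apply, star_div₀, Complex.star_def, ← AddChar.map_neg_eq_conj,
      Complex.conj_ofReal, neg_neg, div_mul_div_comm, ← AddChar.map_add_eq_mul, hp, mul_sub,
      sub_eq_add_neg]
  simp only [mul_apply, conjTranspose_apply, hterm, ← Finset.sum_div, sum_finStdAddChar_mul,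
    sub_eq_zero, one_apply]
  split_ifs <;> simp [NeZero.ne]

theorem Fmat_mul_conjTranspose_Fmat : Fmat p * (Fmat p)ᴴ = 1 :=
  mul_eq_one_comm.mp conjTranspose_Fmat_mul_Fmat

theorem kronecker_conjTranspose_Fmat_mul_kronecker_Fmat [Fintype ι] [DecidableEq ι] :
    ((Fmat p)ᴴ ⊗ₖ (1 : Matrix ι ι ℂ)) * (Fmat p ⊗ₖ (1 : Matrix ι ι ℂ)) = 1 := by
  rw [← mul_kronecker_mul, conjTranspose_Fmat_mul_Fmat, Matrix.one_mul, one_kronecker_one]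

theorem kronecker_Fmat_mul_kronecker_conjTranspose_Fmat [Fintype ι] [DecidableEq ι] :
    (Fmat p ⊗ₖ (1 : Matrix ι ι ℂ)) * ((Fmat p)ᴴ ⊗ₖ (1 : Matrix ι ι ℂ)) = 1 := by
  rw [← mul_kronecker_mul, Fmat_mul_conjTranspose_Fmat, Matrix.one_mul, one_kronecker_one]

theorem bcirc_tprod [Fintype κ] (A : Tensor ι κ p) (B : Tensor κ μ p) :
    bcirc (tprod A B) = bcirc A * bcirc B := by
  ext ⟨k, a⟩ ⟨l, b⟩
  simp only [bcirc, tprod, tfold, tunfold, mul_apply, of_apply, Fintype.sum_prod_type]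
  refine Fintype.sum_equiv (Equiv.addRight l) _ _ fun j => ?_
  simp [sub_add_eq_sub_sub, sub_right_comm]

theorem bcirc_tconjT (A : Tensor ι κ p) : bcirc (tconjT A) = (bcirc A)ᴴ := by
  ext ⟨k, a⟩ ⟨l, b⟩
  simp [bcirc, tconjT]

theorem bcirc_tid [DecidableEq ι] : bcirc (tid ι p) = 1 := by
  ext ⟨k, a⟩ ⟨l, b⟩
  by_cases hkl : k = l <;> simp [bcirc, tid, one_apply, sub_eq_zero, hkl]

theorem bcirc_injective : Function.Injective (bcirc : Tensor ι κ p → _) := by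
  intro A B h
  funext k
  ext a b
  simpa [bcirc] using congrFun (congrFun h (k, a)) (0, b)

noncomputable def dft (A : Tensor ι κ p) (i : Fin p) : Matrix ι κ ℂ :=
  ∑ d, finStdAddChar p (d * i) • A d

noncomputable def idft (D : Fin p → Matrix ι κ ℂ) : Tensor ι κ p :=
  fun d => (p : ℂ)⁻¹ • ∑ i, finStdAddChar p (-(d * i)) • D i

theorem dft_idft (D : Fin p → Matrix ι κ ℂ) : dft (idft D) = D := by
  funext i
  have hterm (j d : Fin p) :
      finStdAddChar p (d * i) * ((p : ℂ)⁻¹ * finStdAddChar p (-(d * j))) =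
        (p : ℂ)⁻¹ * finStdAddChar p (d * (i - j)) := by
    rw [mul_left_comm, ← AddChar.map_add_eq_mul, mul_sub, sub_eq_add_neg]
  simp only [dft, idft, Finset.smul_sum, smul_smul]
  rw [Finset.sum_comm]
  simp_rw [← Finset.sum_smul, hterm, ← Finset.mul_sum, sum_finStdAddChar_mul, sub_eq_zero]
  simp [NeZero.ne]

open Fin.CommRing in
theorem bcirc_mul_kronecker_Fmat [Fintype ι] [Fintype κ] [DecidableEq ι] [DecidableEq κ]
    (A : Tensor ι κ p) :
    bcirc A * (Fmat p ⊗ₖ (1 : Matrix κ κ ℂ)) = (Fmat p ⊗ₖ (1 : Matrix ι ι ℂ)) * bdiag (dft A) := by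
  ext ⟨k, a⟩ ⟨j, b⟩
  simp only [bcirc, bdiag, dft, mul_apply, of_apply, kroneckerMap_apply, Fmat_apply, one_apply,
    mul_ite, mul_one, mul_zero, ite_mul, zero_mul, Fintype.sum_prod_type, Finset.sum_ite_eq',
    Finset.sum_ite_eq, Finset.mem_univ, ↓reduceIte, Finset.sum_ite_irrel, Finset.sum_const_zero]
  rw [Matrix.sum_apply, Finset.mul_sum]
  refine Fintype.sum_equiv (Equiv.subLeft k) _ _ fun l => ?_
  have hexp : -(l * j) = -(k * j) + (k - l) * j := by ring
  rw [Equiv.subLeft_apply, Matrix.smul_apply, smul_eq_mul, hexp, AddChar.map_add_eq_mul]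
  ring

theorem fblocks_eq_bdiag_dft [Fintype ι] [Fintype κ] [DecidableEq ι] [DecidableEq κ]
    (A : Tensor ι κ p) : fblocks A = bdiag (dft A) := by
  rw [fblocks, Matrix.mul_assoc, bcirc_mul_kronecker_Fmat, ← Matrix.mul_assoc,
    kronecker_conjTranspose_Fmat_mul_kronecker_Fmat, Matrix.one_mul]

theorem fblocks_idft [Fintype ι] [Fintype κ] [DecidableEq ι] [DecidableEq κ]
    (D : Fin p → Matrix ι κ ℂ) : fblocks (idft D) = bdiag D := by
  rw [fblocks_eq_bdiag_dft, dft_idft]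

theorem bcirc_eq_kronecker_Fmat_mul_fblocks [Fintype ι] [Fintype κ] [DecidableEq ι]
    [DecidableEq κ] (A : Tensor ι κ p) :
    bcirc A = (Fmat p ⊗ₖ (1 : Matrix ι ι ℂ)) * fblocks A * ((Fmat p)ᴴ ⊗ₖ (1 : Matrix κ κ ℂ)) := by
  rw [fblocks, ← Matrix.mul_assoc, ← Matrix.mul_assoc,
    kronecker_Fmat_mul_kronecker_conjTranspose_Fmat, Matrix.one_mul, Matrix.mul_assoc,
    kronecker_Fmat_mul_kronecker_conjTranspose_Fmat, Matrix.mul_one]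

theorem fblocks_injective [Fintype ι] [Fintype κ] [DecidableEq ι] [DecidableEq κ] :
    Function.Injective (fblocks : Tensor ι κ p → _) := fun A B h =>
  bcirc_injective (by rw [bcirc_eq_kronecker_Fmat_mul_fblocks, h,
    ← bcirc_eq_kronecker_Fmat_mul_fblocks])

theorem fblocks_tprod [Fintype ι] [Fintype κ] [Fintype μ] [DecidableEq ι] [DecidableEq κ]
    [DecidableEq μ] (A : Tensor ι κ p) (B : Tensor κ μ p) :
    fblocks (tprod A B) = fblocks A * fblocks B := by
  simp only [fblocks, bcirc_tprod, Matrix.mul_assoc]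
  rw [← Matrix.mul_assoc (Fmat p ⊗ₖ _), kronecker_Fmat_mul_kronecker_conjTranspose_Fmat,
    Matrix.one_mul]

theorem fblocks_tconjT [Fintype ι] [Fintype κ] [DecidableEq ι] [DecidableEq κ]
    (A : Tensor ι κ p) : fblocks (tconjT A) = (fblocks A)ᴴ := by
  simp only [fblocks, bcirc_tconjT, conjTranspose_mul, conjTranspose_kronecker,
    conjTranspose_conjTranspose, conjTranspose_one, Matrix.mul_assoc]

theorem fblocks_tid [Fintype ι] [DecidableEq ι] : fblocks (tid ι p) = 1 := by
  rw [fblocks, bcirc_tid, Matrix.mul_one, kronecker_conjTranspose_Fmat_mul_kronecker_Fmat]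

theorem isTUnitary_idft [Fintype ι] [DecidableEq ι] {D : Fin p → Matrix ι ι ℂ}
    (hD : ∀ i, D i ∈ unitaryGroup ι ℂ) : IsTUnitary (idft D) := by
  constructor <;> apply fblocks_injective <;>
    simp only [fblocks_tprod, fblocks_tconjT, fblocks_idft, fblocks_tid, bdiag_conjTranspose,
      bdiag_mul]
  · simp_rw [← star_eq_conjTranspose, mem_unitaryGroup_iff'.mp (hD _)]
    exact bdiag_one
  · simp_rw [← star_eq_conjTranspose, mem_unitaryGroup_iff.mp (hD _)]
    exact bdiag_one

theorem isFDiagFin_idft_rectDiagonal {m n : ℕ} {σ : Fin p → Fin n → ℝ}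
    (hσ : ∀ i j, 0 ≤ σ i j) :
    IsFDiagFin (idft fun i =>
      (rectDiagonal (fun j => (σ i j : ℂ)) : Matrix (Fin m) (Fin n) ℂ)) := by
  rw [IsFDiagFin, fblocks_idft]
  refine ⟨fun i j a b h => ?_, fun ⟨i, a⟩ ⟨j, b⟩ => ?_⟩
  · simp only [bdiag, rectDiagonal, of_apply] at h
    split_ifs at h with hij hab
    · exact ⟨hij, hab⟩
    all_goals simp at h
  · simp only [bdiag, rectDiagonal, of_apply]
    split_ifs <;> simp [hσ]

end TProd

/-- every tensor `A ∈ ℂ^{m×n×p}` admits a T-SVD `A = U * S * Vᴴ` with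
`U`, `V` unitary and `S` F-diagonal with nonnegative entries. -/
theorem exists_tsvd {m n p : ℕ} [NeZero p] (A : Tensor (Fin m) (Fin n) p) :
    ∃ (U : Tensor (Fin m) (Fin m) p) (S : Tensor (Fin m) (Fin n) p)
      (V : Tensor (Fin n) (Fin n) p),
      IsTUnitary U ∧ IsTUnitary V ∧ IsFDiagFin S ∧
        A = tprod U (tprod S (tconjT V)) := by
  choose U hU V hV σ hσ hA using fun i => Matrix.exists_svd (dft A i)
  refine ⟨idft U, idft fun i => rectDiagonal fun j => (σ i j : ℂ), idft V, isTUnitary_idft hU,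
    isTUnitary_idft hV, isFDiagFin_idft_rectDiagonal hσ, fblocks_injective ?_⟩
  rw [fblocks_tprod, fblocks_tprod, fblocks_tconjT, fblocks_idft, fblocks_idft, fblocks_idft,
    bdiag_conjTranspose, bdiag_mul, bdiag_mul, fblocks_eq_bdiag_dft]
  congr 1
  funext i
  exact (hA i).trans (Matrix.mul_assoc _ _ _)
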